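/- arXiv:1611.05472 — 2 statements merged into one kernel-verified Lean document; each statement's English description precedes it below -/
import Mathlib

section
/- There exists a constant C > 0 such that for every sign μ ∈ {+1, −1} and all ξ, η ∈ ℝ² with 0 < |ξ| ≤ 2^{−10} |η|: |(L̂_ξ + L̂_η) Φ^{μ,−μ}(ξ, η) + 4 μ (λ′(|η|²) + λ″(|η|²)|η|²) (ξ·η)| ≤ C |ξ|², where L̂_ξ := −ξ·∇_ξ and L̂_η := −η·∇_η. -/
noncomputable section

abbrev E2 : Type := EuclideanSpace ℝ (Fin 2)

/-- Euclidean dot product on ℝ². -/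
def dotE (x y : E2) : ℝ := ∑ i : Fin 2, x i * y i

/-- `Λ(r) = r^{3/2} (tanh r)^{1/2}`. -/
def Lam (r : ℝ) : ℝ := r ^ ((3 : ℝ) / 2) * Real.sqrt (Real.tanh r)

/-- `λ(x) = Λ(√x)`. -/
def lam (x : ℝ) : ℝ := Lam (Real.sqrt x)

/-- The phase `Φ^{μ,ν}(ξ,η) = Λ(|ξ|) − μ Λ(|ξ−η|) − ν Λ(|η|)`. -/
def Phi (μ ν : ℝ) (ξ η : E2) : ℝ := Lam ‖ξ‖ - μ * Lam ‖ξ - η‖ - ν * Lam ‖η‖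

/-! `L̂_ξ + L̂_η` is minus the generator of the joint dilation `(ξ, η) ↦ (tξ, tη)`, so it sends
`λ(|v|²)` to `-2 g(|v|²)` for `v = ξ, η, ξ - η`, where `g(x) = x λ'(x)`. With `b = |ξ - η|²`,
`c = |η|²` and `b - c = |ξ|² - 2 ξ·η`, the quantity to bound becomes
`-2 g(|ξ|²) + 2μ (g(b) - g(c) - g'(c) (b - c)) + 2μ g'(c) |ξ|²`.
Since `|b - c| ≤ 3 |ξ| |η|` and `b ≥ c / 2`, it suffices that `λ'`, `g'` and `x g''` are bounded on
`(0, ∞)`. Writing `λ = w³ s` with `w = x^{1/4}` and `s = (tanh √x)^{1/2}`, each of them is a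
combination of `s / w ≤ 1` and `(w / s)^k (1 - s⁴)` with `k ≤ 5`, which are bounded because
`w / s ≥ 1` and `(w / s)^6 (1 - s⁴) = (r / tanh r)³ / cosh² r` with `r = √x`. -/

open Real Set

theorem abs_sub_sub_deriv_mul_sub_le {f f' f'' : ℝ → ℝ} {b c M : ℝ}
    (hf : ∀ t ∈ uIcc b c, HasDerivAt f (f' t) t)
    (hf' : ∀ t ∈ uIcc b c, HasDerivAt f' (f'' t) t) (hM : ∀ t ∈ uIcc b c, |f'' t| ≤ M) :
    |f b - f c - f' c * (b - c)| ≤ M * (b - c) ^ 2 := by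
  have hM0 : 0 ≤ M := (abs_nonneg _).trans (hM c right_mem_uIcc)
  have hlip : ∀ t ∈ uIcc b c, ‖f' t - f' c‖ ≤ M * |b - c| := fun t ht =>
    calc ‖f' t - f' c‖ ≤ M * ‖t - c‖ :=
          (convex_uIcc b c).norm_image_sub_le_of_norm_hasDerivWithin_le
            (fun y hy => (hf' y hy).hasDerivWithinAt) hM right_mem_uIcc ht
      _ ≤ M * |b - c| := by
          gcongr
          exact abs_sub_left_of_mem_uIcc (uIcc_comm b c ▸ ht)
  have h := (convex_uIcc b c).norm_image_sub_le_of_norm_hasDerivWithin_le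
    (f := fun t => f t - f' c * t)
    (fun y hy => ((hf y hy).sub ((hasDerivAt_id y).const_mul (f' c))).hasDerivWithinAt)
    (by simpa using hlip) right_mem_uIcc left_mem_uIcc
  calc |f b - f c - f' c * (b - c)| = ‖(f b - f' c * b) - (f c - f' c * c)‖ := by
        rw [Real.norm_eq_abs]; ring_nf
    _ ≤ M * |b - c| * ‖b - c‖ := h
    _ = M * (b - c) ^ 2 := by rw [Real.norm_eq_abs, mul_assoc, ← abs_mul, ← sq, abs_sq]

namespace Real

theorem hasDerivAt_tanh (x : ℝ) : HasDerivAt tanh (1 - tanh x ^ 2) x := by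
  have h := (hasDerivAt_sinh x).div (hasDerivAt_cosh x) (cosh_pos x).ne'
  rw [show tanh = sinh / cosh from funext tanh_eq_sinh_div_cosh]
  refine h.congr_deriv ?_
  rw [Pi.div_apply, div_pow, one_sub_div (pow_ne_zero 2 (cosh_pos x).ne')]
  ring

theorem tanh_pos {x : ℝ} (hx : 0 < x) : 0 < tanh x := by
  rw [tanh_eq_sinh_div_cosh]
  exact div_pos (sinh_pos_iff.2 hx) (cosh_pos x)

theorem tanh_le_self {x : ℝ} (hx : 0 ≤ x) : tanh x ≤ x := by
  have h := image_sub_le_mul_sub_of_deriv_le (fun y => (hasDerivAt_tanh y).differentiableAt)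
    (C := 1) (fun y => by rw [(hasDerivAt_tanh y).deriv]; nlinarith [sq_nonneg (tanh y)]) hx
  simpa [tanh_zero] using h

theorem one_sub_tanh_sq (x : ℝ) : 1 - tanh x ^ 2 = (cosh x ^ 2)⁻¹ := by
  rw [tanh_eq_sinh_div_cosh]
  have hc := (cosh_pos x).ne'
  field_simp
  linear_combination cosh_sq x

theorem div_tanh_le_one_add {x : ℝ} (hx : 0 < x) : x / tanh x ≤ 1 + x := by
  rw [div_le_iff₀ (tanh_pos hx), tanh_eq_sinh_div_cosh, mul_div_assoc', le_div_iff₀ (cosh_pos x)]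
  -- `x (cosh x - sinh x) = x e⁻ˣ ≤ x ≤ sinh x`
  have hexp : x * exp (-x) ≤ x := mul_le_of_le_one_right hx.le (exp_le_one_iff.2 (by linarith))
  nlinarith [cosh_sub_sinh x, self_le_sinh_iff.2 hx.le]

theorem one_add_pow_three_le_mul_cosh_sq (x : ℝ) : (1 + x) ^ 3 ≤ 27 / 2 * cosh x ^ 2 := by
  rcases lt_or_ge (1 + x) 0 with hneg | hnonneg
  · nlinarith [Odd.pow_neg (n := 3) (by decide) hneg, sq_nonneg (cosh x)]
  have h1 : 1 + x ≤ 3 / 2 * exp (2 * x / 3) := by nlinarith [add_one_le_exp (2 * x / 3)]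
  have h2 : exp (2 * x / 3) ^ 3 = exp x ^ 2 := by rw [← exp_nat_mul, ← exp_nat_mul]; ring_nf
  have h3 : exp x ≤ 2 * cosh x := by rw [cosh_eq]; linarith [exp_pos (-x)]
  calc (1 + x) ^ 3 ≤ (3 / 2 * exp (2 * x / 3)) ^ 3 := by gcongr
    _ = 27 / 8 * exp x ^ 2 := by rw [mul_pow, h2]; norm_num
    _ ≤ 27 / 8 * (2 * cosh x) ^ 2 := by gcongr
    _ = 27 / 2 * cosh x ^ 2 := by ring

theorem div_tanh_pow_three_mul_one_sub_tanh_sq_le {x : ℝ} (hx : 0 < x) :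
    (x / tanh x) ^ 3 * (1 - tanh x ^ 2) ≤ 27 / 2 := by
  have hc : 0 < cosh x ^ 2 := by positivity [cosh_pos x]
  calc (x / tanh x) ^ 3 * (1 - tanh x ^ 2) ≤ (1 + x) ^ 3 * (cosh x ^ 2)⁻¹ := by
        rw [one_sub_tanh_sq]
        gcongr
        · exact (div_pos hx (tanh_pos hx)).le
        · exact div_tanh_le_one_add hx
    _ ≤ 27 / 2 := by
        rw [← div_eq_mul_inv, div_le_iff₀ hc]; exact one_add_pow_three_le_mul_cosh_sq x

end Real

namespace CapillaryPhase

variable {x : ℝ}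

def fourthRoot (x : ℝ) : ℝ := √√x

def sqrtTanhSqrt (x : ℝ) : ℝ := √(tanh √x)

theorem fourthRoot_pos (hx : 0 < x) : 0 < fourthRoot x := sqrt_pos.2 (sqrt_pos.2 hx)

theorem sqrtTanhSqrt_pos (hx : 0 < x) : 0 < sqrtTanhSqrt x :=
  sqrt_pos.2 (tanh_pos (sqrt_pos.2 hx))

theorem fourthRoot_sq : fourthRoot x ^ 2 = √x := sq_sqrt (sqrt_nonneg x)

theorem fourthRoot_pow_four (hx : 0 ≤ x) : fourthRoot x ^ 4 = x := by
  rw [show 4 = 2 * 2 by rfl, pow_mul, fourthRoot_sq, sq_sqrt hx]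

theorem sqrtTanhSqrt_sq (hx : 0 < x) : sqrtTanhSqrt x ^ 2 = tanh √x :=
  sq_sqrt (tanh_pos (sqrt_pos.2 hx)).le

theorem sqrtTanhSqrt_pow_four (hx : 0 < x) : sqrtTanhSqrt x ^ 4 = tanh √x ^ 2 := by
  rw [show 4 = 2 * 2 by rfl, pow_mul, sqrtTanhSqrt_sq hx]

theorem sqrtTanhSqrt_le_fourthRoot : sqrtTanhSqrt x ≤ fourthRoot x :=
  sqrt_le_sqrt (tanh_le_self (sqrt_nonneg x))

theorem sqrtTanhSqrt_pow_four_lt_one (hx : 0 < x) : sqrtTanhSqrt x ^ 4 < 1 := by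
  rw [sqrtTanhSqrt_pow_four hx]; exact tanh_sq_lt_one _

theorem fourthRoot_div_sqrtTanhSqrt_pow_mul_le {k : ℕ} (hx : 0 < x) (hk : k ≤ 6) :
    (fourthRoot x / sqrtTanhSqrt x) ^ k * (1 - sqrtTanhSqrt x ^ 4) ≤ 27 / 2 := by
  have hq : 1 ≤ fourthRoot x / sqrtTanhSqrt x :=
    (one_le_div (sqrtTanhSqrt_pos hx)).2 sqrtTanhSqrt_le_fourthRoot
  have hq6 : (fourthRoot x / sqrtTanhSqrt x) ^ 6 = (√x / tanh √x) ^ 3 := by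
    rw [show 6 = 2 * 3 by rfl, pow_mul, div_pow, fourthRoot_sq, sqrtTanhSqrt_sq hx]
  calc (fourthRoot x / sqrtTanhSqrt x) ^ k * (1 - sqrtTanhSqrt x ^ 4)
      ≤ (fourthRoot x / sqrtTanhSqrt x) ^ 6 * (1 - sqrtTanhSqrt x ^ 4) := by
        gcongr
        linarith [sqrtTanhSqrt_pow_four_lt_one hx]
    _ ≤ 27 / 2 := by
        rw [hq6, sqrtTanhSqrt_pow_four hx]
        exact div_tanh_pow_three_mul_one_sub_tanh_sq_le (sqrt_pos.2 hx)

theorem hasDerivAt_fourthRoot (hx : 0 < x) :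
    HasDerivAt fourthRoot (1 / (4 * fourthRoot x ^ 3)) x := by
  have h := (hasDerivAt_sqrt (sqrt_pos.2 hx).ne').comp x (hasDerivAt_sqrt hx.ne')
  refine h.congr_deriv ?_
  change 1 / (2 * fourthRoot x) * _ = _
  rw [← fourthRoot_sq]
  have := fourthRoot_pos hx
  field_simp
  ring

theorem hasDerivAt_sqrtTanhSqrt (hx : 0 < x) :
    HasDerivAt sqrtTanhSqrt
      ((1 - sqrtTanhSqrt x ^ 4) / (4 * sqrtTanhSqrt x * fourthRoot x ^ 2)) x := by
  have h := ((hasDerivAt_sqrt (tanh_pos (sqrt_pos.2 hx)).ne').comp _ (hasDerivAt_tanh √x)).comp x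
    (hasDerivAt_sqrt hx.ne')
  refine h.congr_deriv ?_
  rw [sqrtTanhSqrt_pow_four hx, fourthRoot_sq]
  change 1 / (2 * sqrtTanhSqrt x) * _ * _ = _
  have := sqrtTanhSqrt_pos hx
  have := sqrt_pos.2 hx
  field_simp
  ring

theorem lam_eq_fourthRoot_pow_mul : lam = fun x => fourthRoot x ^ 3 * sqrtTanhSqrt x := by
  funext x
  rcases le_or_gt x 0 with hx | hx
  · simp [lam, Lam, fourthRoot, sqrtTanhSqrt, sqrt_eq_zero_of_nonpos hx]
  · rw [lam, Lam, ← fourthRoot_sq, ← rpow_natCast, ← rpow_mul (fourthRoot_pos hx).le]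
    norm_num [fourthRoot_sq, sqrtTanhSqrt]

def lamDeriv (x : ℝ) : ℝ :=
  3 / 4 * (sqrtTanhSqrt x / fourthRoot x)
    + 1 / 4 * (fourthRoot x / sqrtTanhSqrt x) * (1 - sqrtTanhSqrt x ^ 4)

def eulerLam (x : ℝ) : ℝ := x * lamDeriv x

def eulerLamDeriv (x : ℝ) : ℝ :=
  9 / 16 * (sqrtTanhSqrt x / fourthRoot x)
    + 1 / 2 * (fourthRoot x / sqrtTanhSqrt x) * (1 - sqrtTanhSqrt x ^ 4)
    - 1 / 16 * (fourthRoot x / sqrtTanhSqrt x) ^ 3 * (1 - sqrtTanhSqrt x ^ 4)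
      * (1 + 3 * sqrtTanhSqrt x ^ 4)

def eulerLamDeriv2 (x : ℝ) : ℝ :=
  (-(9 / 64) * (sqrtTanhSqrt x / fourthRoot x)
    + 17 / 64 * (fourthRoot x / sqrtTanhSqrt x) * (1 - sqrtTanhSqrt x ^ 4)
    - 11 / 64 * (fourthRoot x / sqrtTanhSqrt x) ^ 3 * (1 - sqrtTanhSqrt x ^ 4)
      * (1 + 3 * sqrtTanhSqrt x ^ 4)
    + 1 / 64 * (fourthRoot x / sqrtTanhSqrt x) ^ 5 * (1 - sqrtTanhSqrt x ^ 4)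
      * (15 * sqrtTanhSqrt x ^ 8 - 2 * sqrtTanhSqrt x ^ 4 + 3)) / x

theorem hasDerivAt_lam (hx : 0 < x) : HasDerivAt lam (lamDeriv x) x := by
  rw [lam_eq_fourthRoot_pow_mul]
  have hw := fourthRoot_pos hx
  have hs := sqrtTanhSqrt_pos hx
  refine (((hasDerivAt_fourthRoot hx).pow 3).mul (hasDerivAt_sqrtTanhSqrt hx)).congr_deriv ?_
  simp only [Pi.pow_apply, lamDeriv]
  field_simp
  ring

theorem hasDerivAt_lamDeriv (hx : 0 < x) :
    HasDerivAt lamDeriv ((eulerLamDeriv x - lamDeriv x) / x) x := by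
  have hw := fourthRoot_pos hx
  have hs := sqrtTanhSqrt_pos hx
  have hw' := hasDerivAt_fourthRoot hx
  have hs' := hasDerivAt_sqrtTanhSqrt hx
  refine (((hs'.div hw' hw.ne').const_mul (3 / 4)).add
    (((hw'.div hs' hs.ne').const_mul (1 / 4)).mul ((hs'.pow 4).const_sub 1))).congr_deriv ?_
  have hx4 := fourthRoot_pow_four hx.le
  simp only [Pi.pow_apply, Pi.div_apply, eulerLamDeriv, lamDeriv]
  generalize fourthRoot x = w at *
  generalize sqrtTanhSqrt x = s at *
  subst hx4
  field_simp
  ring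

theorem hasDerivAt_eulerLam (hx : 0 < x) : HasDerivAt eulerLam (eulerLamDeriv x) x := by
  refine ((hasDerivAt_id x).mul (hasDerivAt_lamDeriv hx)).congr_deriv ?_
  simp only [id_eq, one_mul]
  field_simp
  ring

theorem hasDerivAt_eulerLamDeriv (hx : 0 < x) :
    HasDerivAt eulerLamDeriv (eulerLamDeriv2 x) x := by
  have hw := fourthRoot_pos hx
  have hs := sqrtTanhSqrt_pos hx
  have hw' := hasDerivAt_fourthRoot hx
  have hs' := hasDerivAt_sqrtTanhSqrt hx
  have hq' := hw'.div hs' hs.ne'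
  have hσ' := (hs'.pow 4).const_sub 1
  refine ((((hs'.div hw' hw.ne').const_mul (9 / 16)).add ((hq'.const_mul (1 / 2)).mul hσ')).sub
    ((((hq'.pow 3).const_mul (1 / 16)).mul hσ').mul (((hs'.pow 4).const_mul 3).const_add 1))
    ).congr_deriv ?_
  have hx4 := fourthRoot_pow_four hx.le
  simp only [Pi.pow_apply, Pi.div_apply, Pi.mul_apply, Nat.reduceSub, eulerLamDeriv2]
  generalize fourthRoot x = w at *
  generalize sqrtTanhSqrt x = s at *
  subst hx4
  field_simp
  ring

theorem abs_sqrtTanhSqrt_div_fourthRoot_le_one (hx : 0 < x) :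
    |sqrtTanhSqrt x / fourthRoot x| ≤ 1 := by
  rw [abs_of_pos (div_pos (sqrtTanhSqrt_pos hx) (fourthRoot_pos hx)),
    div_le_one (fourthRoot_pos hx)]
  exact sqrtTanhSqrt_le_fourthRoot

theorem abs_fourthRoot_div_sqrtTanhSqrt_pow_mul_le {k : ℕ} (hx : 0 < x) (hk : k ≤ 6) {P c : ℝ}
    (hP : |P| ≤ c) :
    |(fourthRoot x / sqrtTanhSqrt x) ^ k * (1 - sqrtTanhSqrt x ^ 4) * P| ≤ 27 / 2 * c := by
  have hσ : 0 ≤ 1 - sqrtTanhSqrt x ^ 4 := by linarith [sqrtTanhSqrt_pow_four_lt_one hx]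
  have hq : 0 ≤ fourthRoot x / sqrtTanhSqrt x :=
    (div_pos (fourthRoot_pos hx) (sqrtTanhSqrt_pos hx)).le
  rw [abs_mul, abs_of_nonneg (by positivity)]
  exact mul_le_mul (fourthRoot_div_sqrtTanhSqrt_pow_mul_le hx hk) hP (abs_nonneg P)
    (by norm_num)

theorem abs_lamDeriv_le (hx : 0 < x) : |lamDeriv x| ≤ 5 := by
  have h1 := abs_le.1 (abs_sqrtTanhSqrt_div_fourthRoot_le_one hx)
  have h2 := abs_le.1 (abs_fourthRoot_div_sqrtTanhSqrt_pow_mul_le hx (k := 1) (by norm_num)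
    (abs_one.le : |(1 : ℝ)| ≤ 1))
  rw [lamDeriv, abs_le]
  constructor <;> linarith

theorem abs_eulerLamDeriv_le (hx : 0 < x) : |eulerLamDeriv x| ≤ 11 := by
  have hs4 := sqrtTanhSqrt_pow_four_lt_one hx
  have hs4' : 0 < sqrtTanhSqrt x ^ 4 := pow_pos (sqrtTanhSqrt_pos hx) 4
  have h1 := abs_le.1 (abs_sqrtTanhSqrt_div_fourthRoot_le_one hx)
  have h2 := abs_le.1 (abs_fourthRoot_div_sqrtTanhSqrt_pow_mul_le hx (k := 1) (by norm_num)
    (abs_one.le : |(1 : ℝ)| ≤ 1))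
  have h3 := abs_le.1 (abs_fourthRoot_div_sqrtTanhSqrt_pow_mul_le hx (k := 3) (by norm_num)
    (P := 1 + 3 * sqrtTanhSqrt x ^ 4) (c := 4) (abs_le.2 ⟨by linarith, by linarith⟩))
  rw [eulerLamDeriv, abs_le]
  constructor <;> linarith

theorem abs_mul_eulerLamDeriv2_le (hx : 0 < x) : |x * eulerLamDeriv2 x| ≤ 17 := by
  have hs4 := sqrtTanhSqrt_pow_four_lt_one hx
  have hs4' : 0 < sqrtTanhSqrt x ^ 4 := pow_pos (sqrtTanhSqrt_pos hx) 4
  have hs8 : sqrtTanhSqrt x ^ 8 = (sqrtTanhSqrt x ^ 4) ^ 2 := by ring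
  have h1 := abs_le.1 (abs_sqrtTanhSqrt_div_fourthRoot_le_one hx)
  have h2 := abs_le.1 (abs_fourthRoot_div_sqrtTanhSqrt_pow_mul_le hx (k := 1) (by norm_num)
    (abs_one.le : |(1 : ℝ)| ≤ 1))
  have h3 := abs_le.1 (abs_fourthRoot_div_sqrtTanhSqrt_pow_mul_le hx (k := 3) (by norm_num)
    (P := 1 + 3 * sqrtTanhSqrt x ^ 4) (c := 4) (abs_le.2 ⟨by linarith, by linarith⟩))
  have h5 := abs_le.1 (abs_fourthRoot_div_sqrtTanhSqrt_pow_mul_le hx (k := 5) (by norm_num)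
    (P := 15 * sqrtTanhSqrt x ^ 8 - 2 * sqrtTanhSqrt x ^ 4 + 3) (c := 18)
    (abs_le.2 ⟨by nlinarith, by nlinarith⟩))
  rw [eulerLamDeriv2, mul_div_cancel₀ _ hx.ne', abs_le]
  constructor <;> linarith

theorem deriv_lam (hx : 0 < x) : deriv lam x = lamDeriv x := (hasDerivAt_lam hx).deriv

theorem deriv_lam_add_deriv_deriv_lam_mul (hx : 0 < x) :
    deriv lam x + deriv (deriv lam) x * x = eulerLamDeriv x := by
  have hderiv : deriv lam =ᶠ[nhds x] lamDeriv :=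
    Filter.eventuallyEq_of_mem (Ioi_mem_nhds hx) fun _ ht => deriv_lam ht
  rw [deriv_lam hx, hderiv.deriv_eq, (hasDerivAt_lamDeriv hx).deriv]
  field_simp
  ring

theorem abs_eulerLam_sub_sub_le {b c : ℝ} (hc : 0 < c) (hb : c / 2 ≤ b) :
    |eulerLam b - eulerLam c - eulerLamDeriv c * (b - c)| ≤ 34 / c * (b - c) ^ 2 := by
  have hpos : ∀ t ∈ uIcc b c, c / 2 ≤ t := fun t ht =>
    le_trans (le_min hb (by linarith)) ht.1
  refine abs_sub_sub_deriv_mul_sub_le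
    (fun t ht => hasDerivAt_eulerLam (by linarith [hpos t ht]))
    (fun t ht => hasDerivAt_eulerLamDeriv (by linarith [hpos t ht])) fun t ht => ?_
  have ht : c / 2 ≤ t := hpos t ht
  have h := abs_mul_eulerLamDeriv2_le (x := t) (by linarith)
  rw [abs_mul, abs_of_pos (by linarith)] at h
  rw [le_div_iff₀ hc]
  nlinarith [abs_nonneg (eulerLamDeriv2 t)]

theorem Lam_norm_eq_lam (v : E2) : Lam ‖v‖ = lam (‖v‖ ^ 2) := by
  rw [lam, sqrt_sq (norm_nonneg v)]

theorem hasFDerivAt_Lam_norm_sub {ξ v : E2} (h : ξ ≠ v) :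
    HasFDerivAt (fun ζ : E2 => Lam ‖ζ - v‖)
      ((2 * lamDeriv (‖ξ - v‖ ^ 2)) • innerSL ℝ (ξ - v)) ξ := by
  have hpos : 0 < ‖ξ - v‖ ^ 2 := by
    have := norm_pos_iff.2 (sub_ne_zero.2 h)
    positivity
  simp only [Lam_norm_eq_lam]
  refine ((hasDerivAt_lam hpos).comp_hasFDerivAt ξ
    ((hasFDerivAt_id ξ).sub_const v).norm_sq).congr_fderiv ?_
  ext y
  simp only [smul_apply, ContinuousLinearMap.comp_apply, ContinuousLinearMap.id_apply,
    innerSL_apply_apply, smul_eq_mul, id_eq]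
  ring

theorem dotE_eq_inner (x y : E2) : dotE x y = inner ℝ x y := by
  simp only [dotE, PiLp.inner_apply, RCLike.inner_apply, conj_trivial, mul_comm]

theorem dotE_gradient (f : E2 → ℝ) (v x : E2) : dotE v (gradient f x) = fderiv ℝ f x v := by
  rw [dotE_eq_inner, real_inner_comm, gradient, InnerProductSpace.toDual_symm_apply]

theorem dilation_Phi_eq (μ ν : ℝ) {ξ η : E2} (hξ : ξ ≠ 0) (hη : η ≠ 0) (hξη : ξ ≠ η) :
    -(dotE ξ (gradient (fun ζ => Phi μ ν ζ η) ξ)) - dotE η (gradient (fun ζ => Phi μ ν ξ ζ) η)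
      = -2 * eulerLam (‖ξ‖ ^ 2) + 2 * μ * eulerLam (‖ξ - η‖ ^ 2)
          + 2 * ν * eulerLam (‖η‖ ^ 2) := by
  have hleft : (fun ζ => Phi μ ν ζ η)
      = fun ζ => Lam ‖ζ - 0‖ - μ * Lam ‖ζ - η‖ - ν * Lam ‖η‖ := by
    simp only [Phi, sub_zero]
  have hright : (fun ζ => Phi μ ν ξ ζ)
      = fun ζ => Lam ‖ξ‖ - μ * Lam ‖ζ - ξ‖ - ν * Lam ‖ζ - 0‖ := by
    simp only [Phi, sub_zero, norm_sub_rev ξ]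
  have hL : HasFDerivAt (fun ζ => Lam ‖ζ - 0‖ - μ * Lam ‖ζ - η‖ - ν * Lam ‖η‖) _ ξ :=
    ((hasFDerivAt_Lam_norm_sub hξ).sub ((hasFDerivAt_Lam_norm_sub hξη).const_mul μ)).sub_const _
  have hR : HasFDerivAt (fun ζ => Lam ‖ξ‖ - μ * Lam ‖ζ - ξ‖ - ν * Lam ‖ζ - 0‖) _ η :=
    (((hasFDerivAt_Lam_norm_sub hξη.symm).const_mul μ).const_sub _).sub
      ((hasFDerivAt_Lam_norm_sub hη).const_mul ν)
  rw [dotE_gradient, dotE_gradient, hleft, hright, hL.fderiv, hR.fderiv]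
  have hsplit : inner ℝ (ξ - η) ξ + inner ℝ (η - ξ) η = ‖ξ - η‖ ^ 2 := by
    rw [← real_inner_self_eq_norm_sq]
    simp only [inner_sub_left, inner_sub_right, real_inner_comm ξ η]
    ring
  simp only [eulerLam, sub_zero, sub_apply, neg_apply, smul_apply, innerSL_apply_apply,
    smul_eq_mul, real_inner_self_eq_norm_sq, norm_sub_rev η ξ]
  linear_combination 2 * μ * lamDeriv (‖ξ - η‖ ^ 2) * hsplit

theorem abs_eulerLam_combination_le {μ nξ nη d : ℝ} (hμ : |μ| = 1) (hξ : 0 < nξ)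
    (hξη : nξ ≤ nη / 4) (hd : |d| ≤ nξ * nη) :
    |(-2 * eulerLam (nξ ^ 2) + 2 * μ * eulerLam (nξ ^ 2 - 2 * d + nη ^ 2)
        + 2 * -μ * eulerLam (nη ^ 2)) + 4 * μ * eulerLamDeriv (nη ^ 2) * d| ≤ 644 * nξ ^ 2 := by
  obtain ⟨hd₁, hd₂⟩ := abs_le.1 hd
  have hη : 0 < nη := by linarith
  set a := nξ ^ 2
  set c := nη ^ 2
  set b := a - 2 * d + c
  have ha : 0 < a := by positivity
  have hc : 0 < c := by positivity
  have hb : c / 2 ≤ b := by nlinarith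
  have hbc : b - c = a - 2 * d := by ring
  have hbc_sq : (b - c) ^ 2 ≤ 9 * a * c :=
    calc (b - c) ^ 2 ≤ (3 * (nξ * nη)) ^ 2 := by
          rw [hbc]; apply sq_le_sq' <;> nlinarith
      _ = 9 * a * c := by ring
  have htaylor : |eulerLam b - eulerLam c - eulerLamDeriv c * (b - c)| ≤ 306 * a :=
    (abs_eulerLam_sub_sub_le hc hb).trans <| by
      rw [div_mul_eq_mul_div, div_le_iff₀ hc]; nlinarith
  have hg : |eulerLam a| ≤ 5 * a := by
    rw [eulerLam, abs_mul, abs_of_pos ha]; nlinarith [abs_lamDeriv_le ha]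
  have hG := abs_eulerLamDeriv_le hc
  calc _ = |-2 * eulerLam a + 2 * μ * (eulerLam b - eulerLam c - eulerLamDeriv c * (b - c))
          + 2 * μ * eulerLamDeriv c * a| := by
        rw [hbc]; ring_nf
    _ ≤ 2 * |eulerLam a| + 2 * |eulerLam b - eulerLam c - eulerLamDeriv c * (b - c)|
          + 2 * |eulerLamDeriv c| * a := by
        refine (abs_add_le _ _).trans (add_le_add ((abs_add_le _ _).trans (le_of_eq ?_)) ?_)
        · simp [abs_mul, hμ]
        · simp [abs_mul, hμ, abs_of_pos ha]
    _ ≤ 644 * a := by nlinarith [abs_nonneg (eulerLamDeriv c)]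

end CapillaryPhase

open CapillaryPhase

theorem stmt13 :
    ∃ C : ℝ, 0 < C ∧
      ∀ μ : ℝ, (μ = 1 ∨ μ = -1) →
        ∀ ξ η : E2, 0 < ‖ξ‖ → ‖ξ‖ ≤ (2 : ℝ) ^ (-10 : ℤ) * ‖η‖ →
          |(-(dotE ξ (gradient (fun ζ : E2 => Phi μ (-μ) ζ η) ξ)) -
              dotE η (gradient (fun ζ : E2 => Phi μ (-μ) ξ ζ) η)) +
              4 * μ * (deriv lam (‖η‖ ^ 2) + deriv (deriv lam) (‖η‖ ^ 2) * ‖η‖ ^ 2) * dotE ξ η| ≤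
            C * ‖ξ‖ ^ 2 := by
  refine ⟨644, by norm_num, fun μ hμ ξ η hξ hξη => ?_⟩
  have hξη' : ‖ξ‖ ≤ ‖η‖ / 4 := by
    rw [show (2 : ℝ) ^ (-10 : ℤ) = 1 / 1024 by norm_num] at hξη
    linarith [norm_nonneg η]
  have hη : 0 < ‖η‖ := by linarith
  have hne : ξ ≠ η := by
    rintro rfl
    linarith
  rw [dilation_Phi_eq μ (-μ) (norm_pos_iff.1 hξ) (norm_pos_iff.1 hη) hne,
    deriv_lam_add_deriv_deriv_lam_mul (by positivity), dotE_eq_inner, norm_sub_sq_real]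
  exact abs_eulerLam_combination_le (by rcases hμ with rfl | rfl <;> norm_num) hξ hξη'
    (abs_real_inner_le_norm ξ η)

end
end

section
/- There exist constants c, C > 0 such that for every sign ν ∈ {+1, −1} and all ξ, η ∈ ℝ² with 0 < |η| ≤ 2^{−10} |ξ| (the high–low interaction with μ = −1): c Λ(|ξ|) ≤ |Φ^{−1,ν}(ξ, η)| ≤ C Λ(|ξ|); that is, in this regime |Φ^{−1,ν}(ξ, η)| is comparable to max{Λ(|ξ|), Λ(|η|)} = Λ(|ξ|). -/
noncomputable section

lemma tanh_nonneg' {r : ℝ} (hr : 0 ≤ r) : 0 ≤ Real.tanh r := by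
  rw [Real.tanh_eq_sinh_div_cosh]
  exact div_nonneg (Real.sinh_nonneg_iff.mpr hr) (Real.cosh_pos r).le

lemma tanh_pos' {r : ℝ} (hr : 0 < r) : 0 < Real.tanh r := by
  rw [Real.tanh_eq_sinh_div_cosh]
  exact div_pos (Real.sinh_pos_iff.mpr hr) (Real.cosh_pos r)

lemma tanh_mono' {a b : ℝ} (hab : a ≤ b) : Real.tanh a ≤ Real.tanh b := by
  rw [Real.tanh_eq_sinh_div_cosh, Real.tanh_eq_sinh_div_cosh,
    div_le_div_iff₀ (Real.cosh_pos a) (Real.cosh_pos b)]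
  have h : 0 ≤ Real.sinh (b - a) := Real.sinh_nonneg_iff.mpr (by linarith)
  rw [Real.sinh_sub] at h
  nlinarith

lemma tanh_two_mul_le {r : ℝ} (hr : 0 ≤ r) : Real.tanh (2 * r) ≤ 2 * Real.tanh r := by
  rw [Real.tanh_eq_sinh_div_cosh, Real.tanh_eq_sinh_div_cosh, mul_div_assoc',
    div_le_div_iff₀ (Real.cosh_pos _) (Real.cosh_pos r)]
  have h1 : Real.sinh (2 * r) = 2 * Real.sinh r * Real.cosh r := Real.sinh_two_mul r
  have h2 : Real.cosh (2 * r) = Real.cosh r ^ 2 + Real.sinh r ^ 2 := Real.cosh_two_mul r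
  have h3 : 0 ≤ Real.sinh r := Real.sinh_nonneg_iff.mpr hr
  have h4 : 1 ≤ Real.cosh r := Real.one_le_cosh r
  nlinarith

lemma Lam_nonneg {r : ℝ} (hr : 0 ≤ r) : 0 ≤ Lam r :=
  mul_nonneg (Real.rpow_nonneg hr _) (Real.sqrt_nonneg _)

lemma Lam_pos {r : ℝ} (hr : 0 < r) : 0 < Lam r :=
  mul_pos (Real.rpow_pos_of_pos hr _) (Real.sqrt_pos.mpr (tanh_pos' hr))

lemma Lam_mono {a b : ℝ} (ha : 0 ≤ a) (hab : a ≤ b) : Lam a ≤ Lam b := by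
  unfold Lam
  exact mul_le_mul (Real.rpow_le_rpow ha hab (by norm_num))
    (Real.sqrt_le_sqrt (tanh_mono' hab)) (Real.sqrt_nonneg _)
    (Real.rpow_nonneg (ha.trans hab) _)

lemma Lam_two_mul_le {r : ℝ} (hr : 0 ≤ r) : Lam (2 * r) ≤ 4 * Lam r := by
  unfold Lam
  have h1 : (2 * r) ^ ((3:ℝ)/2) = 2 ^ ((3:ℝ)/2) * r ^ ((3:ℝ)/2) :=
    Real.mul_rpow (by norm_num) hr
  have h2 : Real.sqrt (Real.tanh (2 * r)) ≤ Real.sqrt 2 * Real.sqrt (Real.tanh r) := by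
    rw [← Real.sqrt_mul (by norm_num)]
    exact Real.sqrt_le_sqrt (tanh_two_mul_le hr)
  have h3 : (2:ℝ) ^ ((3:ℝ)/2) * Real.sqrt 2 = 4 := by
    rw [show Real.sqrt 2 = (2:ℝ) ^ ((1:ℝ)/2) from Real.sqrt_eq_rpow 2,
      ← Real.rpow_add (by norm_num : (0:ℝ) < 2),
      show (3:ℝ)/2 + 1/2 = ((2:ℕ):ℝ) from by norm_num, Real.rpow_natCast]
    norm_num
  calc (2 * r) ^ ((3:ℝ)/2) * Real.sqrt (Real.tanh (2 * r))
      ≤ 2 ^ ((3:ℝ)/2) * r ^ ((3:ℝ)/2) * (Real.sqrt 2 * Real.sqrt (Real.tanh r)) := by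
        rw [h1]
        apply mul_le_mul_of_nonneg_left h2
        positivity
    _ = (2 ^ ((3:ℝ)/2) * Real.sqrt 2) * (r ^ ((3:ℝ)/2) * Real.sqrt (Real.tanh r)) := by ring
    _ = 4 * (r ^ ((3:ℝ)/2) * Real.sqrt (Real.tanh r)) := by rw [h3]

theorem stmt17 :
    ∃ c C : ℝ, 0 < c ∧ 0 < C ∧
      ∀ ν : ℝ, (ν = 1 ∨ ν = -1) →
        ∀ ξ η : E2, 0 < ‖η‖ → ‖η‖ ≤ (2 : ℝ) ^ (-10 : ℤ) * ‖ξ‖ →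
          c * Lam ‖ξ‖ ≤ |Phi (-1) ν ξ η| ∧ |Phi (-1) ν ξ η| ≤ C * Lam ‖ξ‖ := by
  refine ⟨1, 6, one_pos, by norm_num, ?_⟩
  intro ν hν ξ η hη hle
  set a := ‖ξ‖ with ha
  set b := ‖η‖ with hb
  set d := ‖ξ - η‖ with hd
  have hb0 : 0 < b := hη
  have ha0 : 0 < a := by
    by_contra h
    push_neg at h
    have : (2:ℝ) ^ (-10:ℤ) * a ≤ 0 := mul_nonpos_of_nonneg_of_nonpos (by positivity) h
    linarith
  have hba : b ≤ a / 2 := by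
    have h2 : ((2:ℝ) ^ (-10:ℤ)) * a ≤ (1/2) * a :=
      mul_le_mul_of_nonneg_right (by norm_num) ha0.le
    linarith [hle.trans h2]
  have hd0 : 0 ≤ d := norm_nonneg _
  have hdb : b ≤ d := by
    have h1 : a - b ≤ d := by
      have := norm_sub_norm_le ξ η
      simpa [← ha, ← hb, ← hd] using this
    linarith
  have hda : d ≤ 2 * a := by
    have h1 : d ≤ a + b := norm_sub_le ξ η
    linarith
  have hPhi : Phi (-1) ν ξ η = Lam a + Lam d - ν * Lam b := by
    simp only [Phi, ← ha, ← hb, ← hd]; ring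
  have hLb : 0 ≤ Lam b := Lam_nonneg hb0.le
  have hLdb : Lam b ≤ Lam d := Lam_mono hb0.le hdb
  have hLba : Lam b ≤ Lam a := Lam_mono hb0.le (by linarith)
  have hLda : Lam d ≤ 4 * Lam a := (Lam_mono hd0 hda).trans (Lam_two_mul_le ha0.le)
  have hνb : ν * Lam b ≤ Lam b := by
    rcases hν with h | h <;> rw [h] <;> nlinarith
  have hνb' : -Lam b ≤ ν * Lam b := by
    rcases hν with h | h <;> rw [h] <;> nlinarith
  have hlow : Lam a ≤ Phi (-1) ν ξ η := by rw [hPhi]; linarith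
  have hpos : 0 < Phi (-1) ν ξ η := lt_of_lt_of_le (Lam_pos ha0) hlow
  rw [abs_of_pos hpos]
  constructor
  · linarith
  · rw [hPhi]; linarith

end
end
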